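/- Finite model property of DFD^{≠∅}: for every L^{≠∅}-formula φ, if φ is true at some state of some general relational model of DFD^{≠∅}, then φ is true at some state of a finite general relational model of DFD^{≠∅} (one whose set of states is finite). -/

import Mathlib

/-- Terms of DFD: `x ::= v | ○x`. -/
inductive Tm (V : Type) : Type where
  | base : V → Tm V
  | next : Tm V → Tm V
deriving DecidableEq

namespace Tm

variable {V : Type}

/-- The set of terms `○X := {○x : x ∈ X}`. -/
def nextSet [DecidableEq V] (X : Finset (Tm V)) : Finset (Tm V) := X.image Tm.next

/-- The number of `○`'s in a term. -/
def depth : Tm V → ℕ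
  | .base _ => 0
  | .next x => x.depth + 1

/-- The basic variable underlying a term. -/
def baseVar : Tm V → V
  | .base v => v
  | .next x => x.baseVar

/-- The term `○ⁿ x`. -/
def iter : ℕ → Tm V → Tm V
  | 0, x => x
  | n + 1, x => .next (iter n x)

/-- The set of terms `○ⁿ X`. -/
def iterSet [DecidableEq V] : ℕ → Finset (Tm V) → Finset (Tm V)
  | 0, X => X
  | n + 1, X => nextSet (iterSet n X)

end Tm

/-- Formulas of the language `L` of DFD, for the vocabulary `(V, Pred, ar)`. -/
inductive Fm (V Pred : Type) (ar : Pred → ℕ) : Type where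
  | atom : (P : Pred) → (Fin (ar P) → Tm V) → Fm V Pred ar
  | neg : Fm V Pred ar → Fm V Pred ar
  | and : Fm V Pred ar → Fm V Pred ar → Fm V Pred ar
  | next : Fm V Pred ar → Fm V Pred ar
  | dquant : Finset (Tm V) → Fm V Pred ar → Fm V Pred ar
  | datom : Finset (Tm V) → Tm V → Fm V Pred ar

namespace Fm

variable {V Pred : Type} {ar : Pred → ℕ}

/-- Material implication, defined from `¬` and `∧`. -/
def imp (φ ψ : Fm V Pred ar) : Fm V Pred ar := .neg (.and φ (.neg ψ))

/-- Material biconditional. -/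
def iff (φ ψ : Fm V Pred ar) : Fm V Pred ar := .and (φ.imp ψ) (ψ.imp φ)

/-- The formula `○ⁿ φ`. -/
def iterNext : ℕ → Fm V Pred ar → Fm V Pred ar
  | 0, φ => φ
  | n + 1, φ => .next (iterNext n φ)

/-- Boolean evaluation of a formula under a valuation of formulas; formulas that are not
negations or conjunctions are treated as propositional atoms. -/
def boolEval (v : Fm V Pred ar → Bool) : Fm V Pred ar → Bool
  | .neg φ => !(boolEval v φ)
  | .and φ ψ => boolEval v φ && boolEval v ψ
  | φ => v φ

/-- Classical propositional tautologies. -/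
def Taut (φ : Fm V Pred ar) : Prop := ∀ v, boolEval v φ = true

/-- A fixed trivially valid formula `D_{{v₀}} v₀`, used as the empty conjunction. -/
def vtop [Inhabited V] : Fm V Pred ar := .datom {Tm.base default} (Tm.base default)

/-- Conjunction of a list of formulas. -/
def bigAnd [Inhabited V] : List (Fm V Pred ar) → Fm V Pred ar
  | [] => vtop
  | φ :: l => l.foldl Fm.and φ

/-- The formula `D_X Y`: the conjunction of `D_X y` over `y ∈ Y`. -/
noncomputable def depF [Inhabited V] (X Y : Finset (Tm V)) : Fm V Pred ar :=
  bigAnd (Y.toList.map (Fm.datom X))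

/-- Membership in the fragment `L^{≠∅}`: every index set of a dependence quantifier or
dependence atom is non-empty. -/
def neIdx : Fm V Pred ar → Prop
  | .atom _ _ => True
  | .neg φ => φ.neIdx
  | .and φ ψ => φ.neIdx ∧ ψ.neIdx
  | .next φ => φ.neIdx
  | .dquant X φ => X.Nonempty ∧ φ.neIdx
  | .datom X _ => X.Nonempty

end Fm

/-- The set `V = {v₁, …, v_N}` of all basic variables, as a set of terms. -/
def fullV (V : Type) [Fintype V] [DecidableEq V] : Finset (Tm V) :=
  (Finset.univ : Finset V).image Tm.base
/-- The underlying frame of a general relational model: a set of worlds, a transition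
function, a binary relation `=_X` for each finite set of terms `X`, and a valuation for
predicate atoms and dependence atoms. -/
structure GRKripke (V Pred : Type) (ar : Pred → ℕ) where
  W : Type
  nonempty : Nonempty W
  g : W → W
  eq : Finset (Tm V) → W → W → Prop
  valAtom : (P : Pred) → (Fin (ar P) → Tm V) → W → Prop
  valDep : Finset (Tm V) → Tm V → W → Prop

variable {V Pred : Type} {ar : Pred → ℕ}

/-- Truth of a formula at a state of a general relational model. -/
def GRKripke.sat (M : GRKripke V Pred ar) : Fm V Pred ar → M.W → Prop
  | .atom P args, s => M.valAtom P args s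
  | .neg φ, s => ¬ M.sat φ s
  | .and φ ψ, s => M.sat φ s ∧ M.sat ψ s
  | .next φ, s => M.sat φ (M.g s)
  | .dquant X φ, s => ∀ t, M.eq X s t → M.sat φ t
  | .datom X y, s => M.valDep X y s

/-- General relational models of the logic DFD (conditions C1–C8). -/
structure GRModel (V Pred : Type) [DecidableEq V] [Fintype V] (ar : Pred → ℕ)
    extends GRKripke V Pred ar where
  C1 : ∀ s w, eq ∅ s w
  C2 : ∀ X : Finset (Tm V), Equivalence (eq X)
  C3ref : ∀ (X : Finset (Tm V)) (x : Tm V), x ∈ X → ∀ s, valDep X x s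
  C3trans : ∀ (X Y Z : Finset (Tm V)) (s : W), (∀ y ∈ Y, valDep X y s) →
      (∀ z ∈ Z, valDep Y z s) → ∀ z ∈ Z, valDep X z s
  C3det : ∀ (x : Tm V) (s : W), valDep (fullV V) (Tm.next x) s
  C4 : ∀ (X Y : Finset (Tm V)) (s w : W), eq X s w → (∀ y ∈ Y, valDep X y s) →
      (∀ y ∈ Y, valDep X y w) ∧ eq Y s w
  C5 : ∀ (P : Pred) (args : Fin (ar P) → Tm V) (X : Finset (Tm V)) (s w : W),
      eq X s w → (∀ i, args i ∈ X) → valAtom P args s → valAtom P args w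
  C6 : ∀ (P : Pred) (args : Fin (ar P) → Tm V) (s : W),
      valAtom P (fun i => Tm.next (args i)) s ↔ valAtom P args (g s)
  C7 : ∀ (X : Finset (Tm V)) (s w : W), eq (Tm.nextSet X) s w → eq X (g s) (g w)
  C8 : ∀ (X Y : Finset (Tm V)) (s : W), (∀ y ∈ Y, valDep X y (g s)) →
      ∀ y ∈ Tm.nextSet Y, valDep (Tm.nextSet X) y s

/-- General relational models of the logic DFD^{≠∅}: the relations `=_X` and conditions are
only required for non-empty `X`, and condition C1 is dropped. -/
structure GRModelNE (V Pred : Type) [DecidableEq V] [Fintype V] (ar : Pred → ℕ)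
    extends GRKripke V Pred ar where
  C2 : ∀ X : Finset (Tm V), X.Nonempty → Equivalence (eq X)
  C3ref : ∀ (X : Finset (Tm V)) (x : Tm V), x ∈ X → ∀ s, valDep X x s
  C3trans : ∀ (X Y Z : Finset (Tm V)) (s : W), X.Nonempty → Y.Nonempty →
      (∀ y ∈ Y, valDep X y s) → (∀ z ∈ Z, valDep Y z s) → ∀ z ∈ Z, valDep X z s
  C3det : ∀ (x : Tm V) (s : W), valDep (fullV V) (Tm.next x) s
  C4 : ∀ (X Y : Finset (Tm V)) (s w : W), X.Nonempty → Y.Nonempty →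
      eq X s w → (∀ y ∈ Y, valDep X y s) → (∀ y ∈ Y, valDep X y w) ∧ eq Y s w
  C5 : ∀ (P : Pred) (args : Fin (ar P) → Tm V) (X : Finset (Tm V)) (s w : W), X.Nonempty →
      eq X s w → (∀ i, args i ∈ X) → valAtom P args s → valAtom P args w
  C6 : ∀ (P : Pred) (args : Fin (ar P) → Tm V) (s : W),
      valAtom P (fun i => Tm.next (args i)) s ↔ valAtom P args (g s)
  C7 : ∀ (X : Finset (Tm V)) (s w : W), X.Nonempty →
      eq (Tm.nextSet X) s w → eq X (g s) (g w)
  C8 : ∀ (X Y : Finset (Tm V)) (s : W), X.Nonempty → (∀ y ∈ Y, valDep X y (g s)) →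
      ∀ y ∈ Tm.nextSet Y, valDep (Tm.nextSet X) y s

/-!
Restrict to the states reachable from `s₀`, on which nullary atoms are constant. The *profile*
of a state records the truth values of finitely many *queries* read off `φ`: its dependence
quantifiers and dependence atoms, and its predicate atoms with their common `○`-prefix removed.
The finite model consists of the lists of profiles of `s, g s, …, g^[n-1] s` for reachable `s`
and `n ≤ horizon φ + 1`, and `g` drops the head of a list. `D_X y` holds at a list when `y` is
derivable from `X` by the rules `V ⟹ ○x` and `○ᵏZ ⟹ ○ᵏy` for each `D_Z y` recorded true at
position `k`; such derivations are sound in the original model by C3 and C8. `=_X` asks for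
agreement on the queries whose support is derivable from `X`. This makes C2–C8 hold by
construction, and since the queries are invariant under `=_{support}` in the original model
(C4, C5, C7), a truth lemma goes through by induction on formulas.
-/

open Function

namespace Tm

variable {V : Type}

def peel : ℕ → Tm V → Tm V
  | m + 1, .next x => peel m x
  | _, x => x

theorem iterate_next_peel : ∀ {m : ℕ} {x : Tm V}, m ≤ x.depth → next^[m] (peel m x) = x
  | 0, _, _ => rfl
  | m + 1, .base _, h => by simp [depth] at h
  | m + 1, .next x, h => by
    rw [iterate_succ_apply', peel, iterate_next_peel (by simpa [depth] using h)]

theorem iterate_nextSet [DecidableEq V] (k : ℕ) (X : Finset (Tm V)) :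
    nextSet^[k] X = X.image next^[k] := by
  induction k with
  | zero => simp
  | succ k ih => rw [iterate_succ_apply', ih, nextSet, Finset.image_image, iterate_succ']

theorem iterate_nextSet_nonempty [DecidableEq V] {X : Finset (Tm V)} (hX : X.Nonempty) (k : ℕ) :
    (nextSet^[k] X).Nonempty := by
  rw [Tm.iterate_nextSet]
  exact hX.image _

noncomputable def minDepth {k : ℕ} (a : Fin k → Tm V) : ℕ := ⨅ i, (a i).depth

theorem minDepth_le {k : ℕ} (a : Fin k → Tm V) (i : Fin k) : minDepth a ≤ (a i).depth :=
  ciInf_le (OrderBot.bddBelow _) i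

theorem minDepth_next {k : ℕ} (hk : k ≠ 0) (a : Fin k → Tm V) :
    minDepth (fun i => next (a i)) = minDepth a + 1 := by
  have : Nonempty (Fin k) := ⟨⟨0, Nat.pos_of_ne_zero hk⟩⟩
  obtain ⟨i₀, hi₀⟩ := ciInf_mem fun i => (a i).depth
  refine le_antisymm ?_ (le_ciInf fun i => ?_)
  · exact (ciInf_le (OrderBot.bddBelow _) i₀).trans_eq (by simp only [depth, hi₀]; rfl)
  · exact Nat.add_le_add_right (minDepth_le a i) 1

end Tm

/-- Derivability by Horn rules: a rule `(Z, y) ∈ R` derives `y` from all of `Z`. -/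
inductive Derivable {α : Type*} (R : Set (Finset α × α)) (X : Finset α) : α → Prop
  | mem {y : α} : y ∈ X → Derivable R X y
  | rule {Z : Finset α} {y : α} : (Z, y) ∈ R → (∀ z ∈ Z, Derivable R X z) → Derivable R X y

namespace Derivable

variable {α : Type*} {R R' : Set (Finset α × α)} {X Y : Finset α} {y : α}

theorem trans (h : Derivable R Y y) (hY : ∀ z ∈ Y, Derivable R X z) : Derivable R X y := by
  induction h with
  | mem h => exact hY _ h
  | rule hr _ ih => exact .rule hr ih

theorem transfer (hR : ∀ r ∈ R, (∀ z ∈ r.1, Derivable R' X z) → r ∈ R')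
    (h : Derivable R X y) : Derivable R' X y := by
  induction h with
  | mem h => exact .mem h
  | rule hr _ ih => exact .rule (hR _ hr ih) ih

theorem map {β : Type*} [DecidableEq β] {R' : Set (Finset β × β)} (f : α → β)
    (hR : ∀ r ∈ R, Prod.map (Finset.image f) f r ∈ R') (h : Derivable R X y) :
    Derivable R' (X.image f) (f y) := by
  induction h with
  | mem h => exact .mem (Finset.mem_image_of_mem f h)
  | rule hr _ ih => exact .rule (hR _ hr) (Finset.forall_mem_image.2 ih)

end Derivable

namespace Fm

variable {V Pred : Type} [DecidableEq V] {ar : Pred → ℕ}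

/-- The terms whose `=_X`-class fixes the truth of a predicate atom, dependence atom or
dependence quantifier; `∅` for the other connectives. -/
def support : Fm V Pred ar → Finset (Tm V)
  | .atom _ a => Finset.univ.image a
  | .dquant X _ => X
  | .datom X _ => X
  | _ => ∅

/-- The formulas whose truth along the `g`-orbit of a state the finite model records; a
predicate atom is recorded with the `○`-prefix common to its arguments removed. -/
noncomputable def queries : Fm V Pred ar → List (Fm V Pred ar)
  | .atom P a => if ar P = 0 then [] else [.atom P fun i => (a i).peel (Tm.minDepth a)]
  | .neg ψ => ψ.queries
  | .and ψ χ => ψ.queries ++ χ.queries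
  | .next ψ => ψ.queries
  | .dquant X ψ => .dquant X ψ :: ψ.queries
  | .datom X y => [.datom X y]

/-- An atom `P(○ᵏ a)` is decided at `g^[k] s` (C6), so evaluating `ψ` at `s` reads the
profiles of `s, …, g^[horizon ψ] s`. -/
noncomputable def horizon : Fm V Pred ar → ℕ
  | .atom _ a => Tm.minDepth a
  | .neg ψ => ψ.horizon
  | .and ψ χ => max ψ.horizon χ.horizon
  | .next ψ => ψ.horizon + 1
  | .dquant _ ψ => ψ.horizon
  | .datom _ _ => 0

theorem support_nonempty_of_mem_queries {φ q : Fm V Pred ar} (hφ : φ.neIdx)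
    (hq : q ∈ φ.queries) : q.support.Nonempty := by
  induction φ with
  | atom P a =>
    unfold queries at hq
    split_ifs at hq with h0
    · simp at hq
    · rw [List.mem_singleton.1 hq]
      exact Finset.univ_nonempty_iff.2 ⟨⟨0, Nat.pos_of_ne_zero h0⟩⟩ |>.image _
  | neg ψ ih => exact ih hφ hq
  | and ψ χ ihψ ihχ => exact (List.mem_append.1 hq).elim (ihψ hφ.1) (ihχ hφ.2)
  | next ψ ih => exact ih hφ hq
  | dquant X ψ ih =>
    rcases List.mem_cons.1 hq with rfl | hq
    exacts [hφ.1, ih hφ.2 hq]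
  | datom X y => rw [List.mem_singleton.1 hq]; exact hφ

end Fm

namespace GRModelNE

variable {V Pred : Type} [DecidableEq V] [Fintype V] {ar : Pred → ℕ}
variable (M : GRModelNE V Pred ar)

theorem valDep_iterate {X : Finset (Tm V)} (hX : X.Nonempty) {y : Tm V} :
    ∀ (k : ℕ) {s : M.W}, M.valDep X y (M.g^[k] s) →
      M.valDep (Tm.nextSet^[k] X) (Tm.next^[k] y) s
  | 0, _, h => h
  | k + 1, s, h => by
    rw [iterate_succ_apply', iterate_succ_apply']
    refine M.C8 _ {Tm.next^[k] y} s (Tm.iterate_nextSet_nonempty hX k) ?_ _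
      (Finset.mem_image_of_mem _ (Finset.mem_singleton_self _))
    simpa using valDep_iterate hX k (s := M.g s) h

theorem eq_iterate : ∀ (k : ℕ) {X : Finset (Tm V)} {s t : M.W}, X.Nonempty →
    M.eq (Tm.nextSet^[k] X) s t → M.eq X (M.g^[k] s) (M.g^[k] t)
  | 0, _, _, _, _, h => h
  | k + 1, X, s, t, hX, h => by
    rw [iterate_succ_apply', iterate_succ_apply']
    exact M.C7 X _ _ hX (eq_iterate k (Finset.image_nonempty.2 hX) h)

theorem valAtom_iterate_next {P : Pred} :
    ∀ (m : ℕ) (c : Fin (ar P) → Tm V) (s : M.W),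
      M.valAtom P (fun i => Tm.next^[m] (c i)) s ↔ M.valAtom P c (M.g^[m] s)
  | 0, _, _ => Iff.rfl
  | m + 1, c, s => by
    rw [iterate_succ_apply' M.g]
    simp only [iterate_succ_apply]
    rw [valAtom_iterate_next m (fun i => Tm.next (c i)), M.C6]

theorem valDep_of_derivable {R : Set (Finset (Tm V) × Tm V)} {s : M.W}
    (hR : ∀ r ∈ R, r.1.Nonempty ∧ M.valDep r.1 r.2 s) {X : Finset (Tm V)} (hX : X.Nonempty)
    {y : Tm V} (h : Derivable R X y) : M.valDep X y s := by
  induction h with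
  | mem h => exact M.C3ref X _ h s
  | @rule Z y hr _ ih =>
    exact M.C3trans X Z {y} s hX (hR _ hr).1 ih (by simpa using (hR _ hr).2) y
      (Finset.mem_singleton_self y)

theorem sat_iff_of_eq_support {q : Fm V Pred ar} (hq : q.support.Nonempty) {s t : M.W}
    (h : M.eq q.support s t) : M.sat q s ↔ M.sat q t := by
  have hE := M.C2 _ hq
  cases q with
  | atom P a =>
    have ha : ∀ i, a i ∈ Fm.support (.atom P a) := fun i =>
      Finset.mem_image_of_mem _ (Finset.mem_univ i)
    exact ⟨M.C5 P a _ s t hq h ha, M.C5 P a _ t s hq (hE.symm h) ha⟩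
  | dquant X ψ =>
    exact ⟨fun H u hu => H u (hE.trans h hu), fun H u hu => H u (hE.trans (hE.symm h) hu)⟩
  | datom X y =>
    have transport {u v : M.W} (huv : M.eq X u v) (hu : M.valDep X y u) : M.valDep X y v :=
      (M.C4 X {y} u v hq (Finset.singleton_nonempty y) huv (by simpa using hu)).1 y
        (Finset.mem_singleton_self y)
    exact ⟨transport h, transport (hE.symm h)⟩
  | _ => simp [Fm.support] at hq

inductive Reachable (s₀ : M.W) : M.W → Prop
  | refl : Reachable s₀ s₀
  | g {s : M.W} : Reachable s₀ s → Reachable s₀ (M.g s)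
  | eq {X : Finset (Tm V)} {s t : M.W} : X.Nonempty → M.eq X s t → Reachable s₀ s →
      Reachable s₀ t

theorem valAtom_iff_of_reachable {P : Pred} (h0 : ar P = 0) (a : Fin (ar P) → Tm V)
    {s₀ s : M.W} (hs : M.Reachable s₀ s) : M.valAtom P a s ↔ M.valAtom P a s₀ := by
  induction hs with
  | refl => rfl
  | @g s _ ih =>
    have hnext : (fun i => Tm.next (a i)) = a := funext fun i => absurd i.2 (by omega)
    rw [← ih, ← M.C6, hnext]
  | @eq X _ _ hX hst _ ih =>
    have ha : ∀ i, a i ∈ X := fun i => absurd i.2 (by omega)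
    rw [← ih]
    exact ⟨M.C5 P a _ _ _ hX ((M.C2 _ hX).symm hst) ha, M.C5 P a _ _ _ hX hst ha⟩

end GRModelNE

namespace FiniteModel

open Tm

section Profiles

variable {V Pred : Type} {ar : Pred → ℕ}

def Profile (φ : Fm V Pred ar) : Type := {q // q ∈ φ.queries} → Prop

instance (φ : Fm V Pred ar) : Finite (Profile φ) :=
  haveI : Finite {q // q ∈ φ.queries} := (List.finite_toSet _).to_subtype
  Pi.finite

variable (φ : Fm V Pred ar)

def HoldsAt (l : List (Profile φ)) (k : ℕ) (q : Fm V Pred ar) : Prop :=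
  ∃ b ∈ l[k]?, ∃ h : q ∈ φ.queries, b ⟨q, h⟩

theorem holdsAt_tail {l : List (Profile φ)} {k : ℕ} {q : Fm V Pred ar} :
    HoldsAt φ l.tail k q ↔ HoldsAt φ l (k + 1) q := by
  rw [HoldsAt, HoldsAt, List.getElem?_tail]

variable [DecidableEq V] [Fintype V]

/-- A rule recorded at position `k` is shifted by `○ᵏ`: `k` applications of C8 bring it back
to the head of the list. -/
def rulesAt (l : List (Profile φ)) : Set (Finset (Tm V) × Tm V) :=
  {r | ∃ k Z y, ((Z = fullV V ∧ ∃ x, y = next x) ∨ HoldsAt φ l k (.datom Z y)) ∧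
    r = (nextSet^[k] Z, next^[k] y)}

theorem derivable_next {l : List (Profile φ)} {X : Finset (Tm V)} {y : Tm V}
    (h : Derivable (rulesAt φ l.tail) X y) : Derivable (rulesAt φ l) (nextSet X) (next y) := by
  refine h.map next ?_
  rintro _ ⟨k, Z, y, hr, rfl⟩
  refine ⟨k + 1, Z, y, hr.imp_right (holdsAt_tail φ).1, ?_⟩
  simp only [Prod.map, iterate_succ_apply']
  rfl

/-- Agreement is required only on the queries whose support, shifted to position `k`, is
derivable from `X`; then `=_X` implies `=_Y` whenever `X` derives `Y` (C4), and the disjunction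
makes the relation transitive. -/
def EqAt (X : Finset (Tm V)) (l l' : List (Profile φ)) : Prop :=
  l.length = l'.length ∧ ∀ k q,
    ((∀ z ∈ nextSet^[k] (Fm.support q), Derivable (rulesAt φ l) X z) ∨
      (∀ z ∈ nextSet^[k] (Fm.support q), Derivable (rulesAt φ l') X z)) →
    (HoldsAt φ l k q ↔ HoldsAt φ l' k q)

variable {φ} {X Y : Finset (Tm V)} {l l' : List (Profile φ)}

theorem EqAt.derivable (h : EqAt φ X l l') {y : Tm V} (hy : Derivable (rulesAt φ l) X y) :
    Derivable (rulesAt φ l') X y := by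
  refine hy.transfer ?_
  rintro _ ⟨k, Z, y, hr | hr, rfl⟩ hprem
  · exact ⟨k, Z, y, .inl hr, rfl⟩
  · exact ⟨k, Z, y, .inr ((h.2 k (.datom Z y) (.inr hprem)).1 hr), rfl⟩

theorem EqAt.symm (h : EqAt φ X l l') : EqAt φ X l' l :=
  ⟨h.1.symm, fun k q hp => (h.2 k q hp.symm).symm⟩

theorem eqAt_equivalence (X : Finset (Tm V)) : Equivalence (EqAt φ X) where
  refl _ := ⟨rfl, fun _ _ _ => Iff.rfl⟩
  symm := EqAt.symm
  trans {l l' l''} h₁ h₂ := by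
    refine ⟨h₁.1.trans h₂.1, fun k q hp => ?_⟩
    have hmid : ∀ z ∈ nextSet^[k] q.support, Derivable (rulesAt φ l') X z :=
      hp.elim (fun hp z hz => h₁.derivable (hp z hz)) fun hp z hz => h₂.symm.derivable (hp z hz)
    exact (h₁.2 k q (.inr hmid)).trans (h₂.2 k q (.inl hmid))

theorem EqAt.derives (h : EqAt φ X l l') (hY : ∀ y ∈ Y, Derivable (rulesAt φ l) X y) :
    (∀ y ∈ Y, Derivable (rulesAt φ l') X y) ∧ EqAt φ Y l l' := by
  have hY' : ∀ y ∈ Y, Derivable (rulesAt φ l') X y := fun y hy => h.derivable (hY y hy)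
  refine ⟨hY', h.1, fun k q hp => h.2 k q (hp.imp ?_ ?_)⟩
  · exact fun hp z hz => (hp z hz).trans hY
  · exact fun hp z hz => (hp z hz).trans hY'

theorem EqAt.tail (h : EqAt φ (nextSet X) l l') : EqAt φ X l.tail l'.tail := by
  refine ⟨by simp [h.1], fun k q hp => ?_⟩
  rw [holdsAt_tail, holdsAt_tail]
  refine h.2 (k + 1) q (hp.imp ?_ ?_) <;>
  · intro hp z hz
    rw [iterate_succ_apply', nextSet, Finset.mem_image] at hz
    obtain ⟨z, hz, rfl⟩ := hz
    exact derivable_next φ (hp z hz)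

variable (M : GRModelNE V Pred ar) (s₀ : M.W)

/-- Nullary atoms are constant along `g` (by C6), so they keep their value at `s₀`; any other
atom `P(○ᵏ a)`, with `k` maximal, is the query `P(a)` read at position `k`. -/
def ValAtomAt (P : Pred) (a : Fin (ar P) → Tm V) (l : List (Profile φ)) : Prop :=
  if ar P = 0 then M.valAtom P a s₀
  else HoldsAt φ l (minDepth a) (.atom P fun i => (a i).peel (minDepth a))

theorem valAtomAt_next (P : Pred) (a : Fin (ar P) → Tm V) (l : List (Profile φ)) :
    ValAtomAt M s₀ P (fun i => next (a i)) l ↔ ValAtomAt M s₀ P a l.tail := by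
  unfold ValAtomAt
  split_ifs with h0
  · rw [show (fun i => next (a i)) = a from funext fun i => absurd i.2 (by omega)]
  · rw [minDepth_next h0, holdsAt_tail]
    rfl

theorem EqAt.valAtomAt {P : Pred} {a : Fin (ar P) → Tm V} (h : EqAt φ X l l')
    (ha : ∀ i, a i ∈ X) (hv : ValAtomAt M s₀ P a l) : ValAtomAt M s₀ P a l' := by
  unfold ValAtomAt at hv ⊢
  split_ifs at hv ⊢ with h0
  · exact hv
  refine (h.2 _ _ (.inl fun z hz => .mem ?_)).1 hv
  rw [iterate_nextSet, Fm.support, Finset.image_image] at hz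
  obtain ⟨i, -, rfl⟩ := Finset.mem_image.1 hz
  rw [comp_apply, iterate_next_peel (minDepth_le a i)]
  exact ha i

end Profiles

variable {V Pred : Type} [DecidableEq V] [Fintype V] {ar : Pred → ℕ}
variable (M : GRModelNE V Pred ar) (s₀ : M.W) (φ : Fm V Pred ar)

def profile (s : M.W) : Profile φ := fun q => M.sat q.1 s

def trace (n : ℕ) (s : M.W) : List (Profile φ) :=
  List.ofFn fun i : Fin n => profile M φ (M.g^[i] s)

variable {M φ} {n k : ℕ} {s t : M.W} {X : Finset (Tm V)}

theorem length_trace : (trace M φ n s).length = n := List.length_ofFn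

theorem tail_trace : (trace M φ n s).tail = trace M φ (n - 1) (M.g s) := by
  refine List.ext_getElem? fun k => ?_
  simp only [trace, List.getElem?_tail, List.getElem?_ofFn, ← iterate_succ_apply]
  split_ifs <;> first | rfl | omega

theorem holdsAt_trace {q : Fm V Pred ar} :
    HoldsAt φ (trace M φ n s) k q ↔ k < n ∧ q ∈ φ.queries ∧ M.sat q (M.g^[k] s) := by
  simp only [HoldsAt, trace, List.getElem?_ofFn]
  split_ifs with hk <;> simp [hk, profile]

variable (M φ)

def World : Type :=
  {l : List (Profile φ) // ∃ n ≤ φ.horizon + 1, ∃ s, M.Reachable s₀ s ∧ trace M φ n s = l}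

instance : Finite (World M s₀ φ) := by
  refine Set.Finite.to_subtype
    (s := {l | ∃ n ≤ φ.horizon + 1, ∃ s, M.Reachable s₀ s ∧ trace M φ n s = l}) ?_
  refine (List.finite_length_le _ (φ.horizon + 1)).subset ?_
  rintro _ ⟨n, hn, _, _, rfl⟩
  rwa [Set.mem_ofPred_eq, length_trace]

def finiteModel : GRModelNE V Pred ar where
  W := World M s₀ φ
  nonempty := ⟨(⟨trace M φ 0 s₀, 0, Nat.zero_le _, s₀, .refl, rfl⟩ : World M s₀ φ)⟩
  g w := ⟨w.1.tail, by
    obtain ⟨n, hn, s, hs, hl⟩ := w.2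
    exact ⟨n - 1, by omega, M.g s, hs.g, by rw [← hl, tail_trace]⟩⟩
  eq X w w' := EqAt φ X w.1 w'.1
  valAtom P a w := ValAtomAt M s₀ P a w.1
  valDep X y w := Derivable (rulesAt φ w.1) X y
  C2 X _ := (eqAt_equivalence X).comap Subtype.val
  C3ref _ _ hx _ := .mem hx
  C3trans _ _ _ _ _ _ hY hZ z hz := (hZ z hz).trans hY
  C3det x _ := .rule ⟨0, fullV V, next x, .inl ⟨rfl, x, rfl⟩, rfl⟩ fun _ => .mem
  C4 _ _ _ _ _ _ h hY := h.derives hY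
  C5 _ _ _ _ _ _ h ha hv := h.valAtomAt M s₀ ha hv
  C6 P a w := valAtomAt_next M s₀ P a w.1
  C7 _ _ _ _ h := h.tail
  C8 _ _ _ _ hY y hy := by
    rw [nextSet, Finset.mem_image] at hy
    obtain ⟨y, hy, rfl⟩ := hy
    exact derivable_next φ (hY y hy)

variable {M s₀ φ}

theorem rulesAt_trace_sound (hφ : φ.neIdx) {r : Finset (Tm V) × Tm V}
    (hr : r ∈ rulesAt φ (trace M φ n s)) : r.1.Nonempty ∧ M.valDep r.1 r.2 s := by
  obtain ⟨k, Z, y, ⟨rfl, x, rfl⟩ | hrec, rfl⟩ := hr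
  · have hV : (fullV V).Nonempty :=
      ⟨.base x.baseVar, Finset.mem_image_of_mem _ (Finset.mem_univ _)⟩
    exact ⟨iterate_nextSet_nonempty hV k, M.valDep_iterate hV k (M.C3det x _)⟩
  · obtain ⟨-, hq, hv⟩ := holdsAt_trace.1 hrec
    have hZ : Z.Nonempty := Fm.support_nonempty_of_mem_queries hφ hq
    exact ⟨iterate_nextSet_nonempty hZ k, M.valDep_iterate hZ k hv⟩

theorem sat_iterate_iff_of_eq (hφ : φ.neIdx) (hX : X.Nonempty) (hst : M.eq X s t)
    {q : Fm V Pred ar} (hq : q ∈ φ.queries)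
    (hp : ∀ z ∈ nextSet^[k] q.support, Derivable (rulesAt φ (trace M φ n s)) X z) :
    M.sat q (M.g^[k] s) ↔ M.sat q (M.g^[k] t) := by
  have hS := Fm.support_nonempty_of_mem_queries hφ hq
  have hdep : ∀ z ∈ nextSet^[k] q.support, M.valDep X z s := fun z hz =>
    M.valDep_of_derivable (fun _ hr => rulesAt_trace_sound hφ hr) hX (hp z hz)
  exact M.sat_iff_of_eq_support hS
    (M.eq_iterate k hS (M.C4 X _ s t hX (iterate_nextSet_nonempty hS k) hst hdep).2)

theorem eqAt_trace (hφ : φ.neIdx) (hX : X.Nonempty) (hst : M.eq X s t) (n : ℕ) :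
    EqAt φ X (trace M φ n s) (trace M φ n t) := by
  refine ⟨by rw [length_trace, length_trace], fun k q hp => ?_⟩
  rw [holdsAt_trace, holdsAt_trace]
  refine and_congr_right fun _ => and_congr_right fun hq => hp.elim ?_ fun hp => ?_
  · exact sat_iterate_iff_of_eq hφ hX hst hq
  · exact (sat_iterate_iff_of_eq hφ hX ((M.C2 X hX).symm hst) hq hp).symm

theorem valAtomAt_trace_iff {P : Pred} {a : Fin (ar P) → Tm V}
    (hq : (Fm.atom P a).queries ⊆ φ.queries) (hn : minDepth a < n) (hs : M.Reachable s₀ s) :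
    ValAtomAt M s₀ P a (trace M φ n s) ↔ M.valAtom P a s := by
  rw [ValAtomAt]
  split_ifs with h0
  · exact (M.valAtom_iff_of_reachable h0 a hs).symm
  · rw [holdsAt_trace]
    change _ ∧ _ ∧ M.valAtom P _ _ ↔ _
    rw [← M.valAtom_iterate_next]
    simp only [iterate_next_peel (minDepth_le a _)]
    exact ⟨fun h => h.2.2, fun h => ⟨hn, hq (by simp [Fm.queries, h0]), h⟩⟩

theorem derivable_trace_iff (hφ : φ.neIdx) (hX : X.Nonempty) {y : Tm V}
    (hq : Fm.datom X y ∈ φ.queries) (hn : 0 < n) :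
    Derivable (rulesAt φ (trace M φ n s)) X y ↔ M.valDep X y s := by
  refine ⟨M.valDep_of_derivable (fun _ hr => rulesAt_trace_sound hφ hr) hX, fun h => ?_⟩
  exact .rule ⟨0, X, y, .inr (holdsAt_trace.2 ⟨hn, hq, h⟩), rfl⟩ fun z hz => .mem hz

theorem sat_of_eqAt_trace {ψ : Fm V Pred ar} (hX : X.Nonempty) (hq : Fm.dquant X ψ ∈ φ.queries)
    (hn : 0 < n) (h : EqAt φ X (trace M φ n s) (trace M φ n t))
    (hs : M.sat (.dquant X ψ) s) : M.sat ψ t := by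
  have ht := (h.2 0 (.dquant X ψ) (.inl fun z hz => .mem hz)).1 (holdsAt_trace.2 ⟨hn, hq, hs⟩)
  exact (holdsAt_trace.1 ht).2.2 t ((M.C2 X hX).refl t)

theorem sat_finiteModel_iff (hφ : φ.neIdx) {ψ : Fm V Pred ar} (hq : ψ.queries ⊆ φ.queries)
    (hψ : ψ.neIdx) {n : ℕ} {s : M.W} (w : World M s₀ φ) (hn : n ≤ φ.horizon + 1)
    (hs : M.Reachable s₀ s) (hw : w.1 = trace M φ n s) (hh : ψ.horizon < n) :
    (finiteModel M s₀ φ).sat ψ w ↔ M.sat ψ s := by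
  induction ψ generalizing n s w with
  | atom P a =>
    show ValAtomAt M s₀ P a w.1 ↔ _
    rw [hw]
    exact valAtomAt_trace_iff hq hh hs
  | neg ψ ih => exact not_congr (ih hq hψ w hn hs hw hh)
  | and ψ χ ihψ ihχ =>
    exact and_congr
      (ihψ (List.Subset.trans (List.subset_append_left _ _) hq) hψ.1 w hn hs hw
        ((le_max_left _ _).trans_lt hh))
      (ihχ (List.Subset.trans (List.subset_append_right _ _) hq) hψ.2 w hn hs hw
        ((le_max_right _ _).trans_lt hh))
  | next ψ ih =>
    exact ih hq hψ (n := n - 1) ((finiteModel M s₀ φ).g w) (by omega) hs.g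
      (by show w.1.tail = _; rw [hw, tail_trace]) (by simp only [Fm.horizon] at hh; omega)
  | dquant X ψ ih =>
    have hqψ : ψ.queries ⊆ φ.queries := List.Subset.trans (List.subset_cons_self _ _) hq
    constructor
    · intro H t hst
      have ht := hs.eq hψ.1 hst
      refine (ih hqψ hψ.2 ⟨trace M φ n t, n, hn, t, ht, rfl⟩ hn ht rfl hh).1 (H _ ?_)
      show EqAt φ X w.1 (trace M φ n t)
      rw [hw]
      exact eqAt_trace hφ hψ.1 hst n
    · intro H w' hw'
      obtain ⟨n', -, t, ht, hl⟩ := w'.2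
      change EqAt φ X w.1 w'.1 at hw'
      rw [hw, ← hl] at hw'
      obtain rfl : n' = n := by simpa [length_trace] using hw'.1.symm
      refine (ih hqψ hψ.2 w' hn ht hl.symm hh).2 ?_
      exact sat_of_eqAt_trace hψ.1 (hq List.mem_cons_self) (by omega) hw' H
  | datom X y =>
    show Derivable (rulesAt φ w.1) X y ↔ _
    rw [hw]
    exact derivable_trace_iff hφ hψ (hq (List.mem_singleton_self _)) hh

end FiniteModel

theorem DFDNE_finite_model_property_general {V Pred : Type} [DecidableEq V] [Fintype V]
    {ar : Pred → ℕ} :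
    ∀ φ : Fm V Pred ar, φ.neIdx →
      (∃ (M : GRModelNE V Pred ar) (s : M.W), M.toGRKripke.sat φ s) →
      ∃ M : GRModelNE V Pred ar, Finite M.W ∧ ∃ s : M.W, M.toGRKripke.sat φ s := by
  rintro φ hφ ⟨M, s₀, hs₀⟩
  refine ⟨FiniteModel.finiteModel M s₀ φ, inferInstanceAs (Finite (FiniteModel.World M s₀ φ)),
    ⟨FiniteModel.trace M φ (φ.horizon + 1) s₀, _, le_rfl, s₀, .refl, rfl⟩, ?_⟩
  exact (FiniteModel.sat_finiteModel_iff hφ (List.Subset.refl _) hφ _ le_rfl .refl rfl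
    (Nat.lt_succ_self _)).2 hs₀

/-- **Finite model property of DFD^{≠∅}**: every `L^{≠∅}`-formula satisfiable in some general
relational model of DFD^{≠∅} is satisfiable in a finite general relational model of
DFD^{≠∅}. -/
theorem DFDNE_finite_model_property {V Pred : Type} [DecidableEq V] [Fintype V] [Inhabited V]
    {ar : Pred → ℕ} :
    ∀ φ : Fm V Pred ar, φ.neIdx →
      (∃ (M : GRModelNE V Pred ar) (s : M.W), M.toGRKripke.sat φ s) →
      ∃ M : GRModelNE V Pred ar, Finite M.W ∧ ∃ s : M.W, M.toGRKripke.sat φ s :=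
  DFDNE_finite_model_property_general
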